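/- With D_1 = n^e and D_{i+1} the gcd of the e×e minors of the matrix (n·I_e | m_1^T | ... | m_i^T), the hypothesis m_i ∉ (nℤ)^e + Σ_{j<i} m_j ℤ for all i implies D_{i+1} < D_i for all 1 ≤ i ≤ h. -/

import Mathlib

/-!
`D_{i+1}` is the index `[ℤ^e : M_i]`. Write `M_i = W ℤ^e` with the columns of `W` a basis of
`M_i`; then the augmented matrix factors as `W * B` with `B` surjective over `ℤ`. Its minors
are `det W` times those of `B`, and by Cauchy–Binet applied to `B` times a right inverse the
minors of `B` have gcd `1`, so `D_{i+1} = |det W| = [ℤ^e : M_i]`. The hypothesis makes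
`M_{i-1} ⊊ M_i`, and `D_i ∣ n^e` shows these indices are finite, so the index drops strictly.
-/

/-- The `e × (e+k)` matrix `(n·I_e | m_1ᵀ | … | m_kᵀ)`. -/
def augMatrixK (e n k : ℕ) (m : ℕ → Fin e → ℕ) :
    Matrix (Fin e) (Fin e ⊕ Fin k) ℤ :=
  fun i j => Sum.elim (fun j' => if i = j' then (n : ℤ) else 0)
    (fun j' : Fin k => (m j' i : ℤ)) j

/-- The gcd of all `e × e` minors of a matrix with `e` rows. -/
noncomputable def gcdMinors {e : ℕ} {c : Type*} [Fintype c] [DecidableEq c]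
    (M : Matrix (Fin e) c ℤ) : ℤ :=
  Finset.gcd (Finset.univ.filter fun g : Fin e → c => Function.Injective g)
    fun g => (M.submatrix id g).det

/-- `D (i+1)` in the paper: the gcd of the `e × e` minors of
`(n·I_e | m_1ᵀ | … | m_iᵀ)`; in particular `D 0 = n^e` here corresponds to `D_1`. -/
noncomputable def Dseq (e n : ℕ) (m : ℕ → Fin e → ℕ) (i : ℕ) : ℤ :=
  gcdMinors (augMatrixK e n i m)

/-- The lattice `(nℤ)^e + m_0 ℤ + ⋯ + m_{i-1} ℤ` (paper notation `M_i`). -/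
def latticeUpTo (e n i : ℕ) (m : ℕ → Fin e → ℕ) : Submodule ℤ (Fin e → ℤ) :=
  Submodule.span ℤ ((Set.range fun j : Fin e => (n : ℤ) • Pi.single j 1) ∪
    (Set.range fun j : Fin i => fun t : Fin e => (m j t : ℤ)))

open Matrix

/-- Cauchy–Binet, summed over all maps `r`; the terms with `r` not injective vanish. -/
theorem Matrix.det_mul_eq_sum_prod_mul_det_submatrix {R n c : Type*} [CommRing R] [Fintype n]
    [DecidableEq n] [Fintype c] (B : Matrix n c R) (S : Matrix c n R) :
    (B * S).det = ∑ r : n → c, (∏ i, S (r i) i) * (B.submatrix id r).det := by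
  have hrows : (B * S)ᵀ = fun i => ∑ x, S x i • Bᵀ x := by
    ext i j
    simp [mul_apply, Finset.sum_apply, mul_comm]
  rw [← det_transpose, hrows]
  change detRowAlternating.toMultilinearMap _ = _
  rw [MultilinearMap.map_sum]
  refine Finset.sum_congr rfl fun r _ => ?_
  rw [MultilinearMap.map_smul_univ, smul_eq_mul, ← det_transpose (B.submatrix id r)]
  rfl

section GcdMinors

variable {e : ℕ} {c : Type*} [Fintype c] [DecidableEq c]

theorem gcdMinors_dvd_det_mul (B : Matrix (Fin e) c ℤ) (S : Matrix c (Fin e) ℤ) :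
    gcdMinors B ∣ (B * S).det := by
  rw [det_mul_eq_sum_prod_mul_det_submatrix]
  refine Finset.dvd_sum fun r _ => Dvd.dvd.mul_left ?_ _
  by_cases hr : Function.Injective r
  · exact Finset.gcd_dvd (by simpa using hr)
  · obtain ⟨i, j, hij, hne⟩ : ∃ i j, r i = r j ∧ i ≠ j := by
      simpa [Function.Injective] using hr
    rw [det_zero_of_column_eq hne fun k => by simp [hij]]
    exact dvd_zero _

theorem gcdMinors_eq_one_of_surjective (B : Matrix (Fin e) c ℤ)
    (hB : Function.Surjective B.mulVecLin) : gcdMinors B = 1 := by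
  obtain ⟨g, hg⟩ :=
    LinearMap.exists_rightInverse_of_surjective B.mulVecLin (LinearMap.range_eq_top.2 hB)
  have hBS : B * LinearMap.toMatrix' g = 1 := by
    apply Matrix.toLin'.injective
    rw [toLin'_mul, toLin'_toMatrix', toLin'_one, toLin'_apply', hg]
  have hdvd := gcdMinors_dvd_det_mul B (LinearMap.toMatrix' g)
  rw [hBS, det_one] at hdvd
  have hnorm : normalize (gcdMinors B) = gcdMinors B := Finset.normalize_gcd
  rw [← hnorm, normalize_eq_one]
  exact isUnit_of_dvd_one hdvd

theorem gcdMinors_mul_left (W : Matrix (Fin e) (Fin e) ℤ) (B : Matrix (Fin e) c ℤ) :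
    gcdMinors (W * B) = normalize W.det * gcdMinors B := by
  rw [gcdMinors, gcdMinors, ← Finset.gcd_mul_left]
  refine Finset.gcd_congr rfl fun g _ => ?_
  rw [submatrix_mul W B id id g Function.bijective_id, submatrix_id_id, det_mul]

theorem gcdMinors_eq_index (A : Matrix (Fin e) c ℤ)
    (hA : Module.finrank ℤ (LinearMap.range A.mulVecLin) = e) :
    gcdMinors A = (LinearMap.range A.mulVecLin).toAddSubgroup.index := by
  set L := LinearMap.range A.mulVecLin
  let b : Module.Basis (Fin e) ℤ L := Module.finBasisOfFinrankEq ℤ L hA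
  let W : Matrix (Fin e) (Fin e) ℤ := (of fun j => (b j : Fin e → ℤ))ᵀ
  let B : Matrix (Fin e) c ℤ :=
    LinearMap.toMatrix' (b.equivFun.toLinearMap ∘ₗ A.mulVecLin.rangeRestrict)
  have hW : W.mulVecLin = L.subtype ∘ₗ b.equivFun.symm.toLinearMap := by
    ext x i
    simp [W, b.equivFun_symm_apply]
  have hB : B.mulVecLin = b.equivFun.toLinearMap ∘ₗ A.mulVecLin.rangeRestrict := by
    rw [← toLin'_apply', toLin'_toMatrix']
  have hAWB : A = W * B := by
    apply Matrix.toLin'.injective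
    rw [toLin'_mul, toLin'_apply', toLin'_apply', toLin'_apply', hW, hB]
    ext x i
    simp
  have hBsurj : Function.Surjective B.mulVecLin := by
    rw [hB]
    exact b.equivFun.surjective.comp A.mulVecLin.surjective_rangeRestrict
  rw [AddSubgroup.index_eq_natAbs_det (Pi.basisFun ℤ (Fin e)) L.toAddSubgroup b,
    Pi.basisFun_det_apply, Int.natCast_natAbs, Int.abs_eq_normalize, ← det_transpose, hAWB,
    gcdMinors_mul_left, gcdMinors_eq_one_of_surjective B hBsurj, mul_one]

end GcdMinors

theorem range_augMatrixK (e n k : ℕ) (m : ℕ → Fin e → ℕ) :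
    LinearMap.range (augMatrixK e n k m).mulVecLin = latticeUpTo e n k m := by
  have hcol : (augMatrixK e n k m).col =
      Sum.elim (fun j => (n : ℤ) • Pi.single j 1) (fun (j : Fin k) t => (m j t : ℤ)) := by
    ext (j | j) t <;> simp [augMatrixK, Pi.single_apply, eq_comm]
  rw [range_mulVecLin, hcol, Set.Sum.elim_range, latticeUpTo]

theorem latticeUpTo_mono_succ (e n i : ℕ) (m : ℕ → Fin e → ℕ) :
    latticeUpTo e n i m ≤ latticeUpTo e n (i + 1) m :=
  Submodule.span_mono <| Set.union_subset_union_right _ <| by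
    rintro v ⟨j, rfl⟩
    exact ⟨j.castSucc, rfl⟩

theorem mem_latticeUpTo_succ (e n i : ℕ) (m : ℕ → Fin e → ℕ) :
    (fun t : Fin e => (m i t : ℤ)) ∈ latticeUpTo e n (i + 1) m :=
  Submodule.subset_span (Or.inr ⟨Fin.last i, rfl⟩)

theorem smul_mem_latticeUpTo (e n i : ℕ) (m : ℕ → Fin e → ℕ) (v : Fin e → ℤ) :
    (n : ℤ) • v ∈ latticeUpTo e n i m := by
  have hv : (n : ℤ) • v = ∑ j, v j • ((n : ℤ) • Pi.single j 1) := by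
    ext t
    simp [Finset.sum_apply, Pi.single_apply, mul_comm]
  rw [hv]
  exact Submodule.sum_mem _ fun j _ =>
    Submodule.smul_mem _ _ (Submodule.subset_span (Or.inl ⟨j, rfl⟩))

theorem finrank_latticeUpTo {e n : ℕ} (hn : n ≠ 0) (i : ℕ) (m : ℕ → Fin e → ℕ) :
    Module.finrank ℤ (latticeUpTo e n i m) = e := by
  refine le_antisymm ((Submodule.finrank_le _).trans_eq (Module.finrank_fin_fun ℤ)) ?_
  have hinj : Function.Injective ((n : ℤ) • LinearMap.id : (Fin e → ℤ) →ₗ[ℤ] Fin e → ℤ) :=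
    smul_right_injective _ (Int.natCast_ne_zero.2 hn)
  calc e = Module.finrank ℤ (LinearMap.range ((n : ℤ) • LinearMap.id)) := by
        rw [LinearMap.finrank_range_of_inj hinj, Module.finrank_fin_fun]
    _ ≤ _ := Submodule.finrank_mono <| by
        rintro _ ⟨v, rfl⟩
        exact smul_mem_latticeUpTo e n i m v

theorem Dseq_eq_index {e n : ℕ} (hn : n ≠ 0) (m : ℕ → Fin e → ℕ) (i : ℕ) :
    Dseq e n m i = (latticeUpTo e n i m).toAddSubgroup.index := by
  have h := gcdMinors_eq_index (augMatrixK e n i m)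
    (by rw [range_augMatrixK]; exact finrank_latticeUpTo hn i m)
  rwa [range_augMatrixK] at h

theorem Dseq_dvd_pow (e n : ℕ) (m : ℕ → Fin e → ℕ) (i : ℕ) : Dseq e n m i ∣ (n : ℤ) ^ e := by
  have hminor : (augMatrixK e n i m).submatrix id Sum.inl = diagonal fun _ => (n : ℤ) := by
    ext s t
    simp [augMatrixK, diagonal_apply]
  have h := Finset.gcd_dvd (f := fun g => ((augMatrixK e n i m).submatrix id g).det)
    (Finset.mem_filter.2 ⟨Finset.mem_univ _, Sum.inl_injective⟩)
  rwa [hminor, det_diagonal, Finset.prod_const, Finset.card_univ, Fintype.card_fin] at h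

theorem finiteIndex_latticeUpTo {e n : ℕ} (hn : n ≠ 0) (i : ℕ) (m : ℕ → Fin e → ℕ) :
    (latticeUpTo e n i m).toAddSubgroup.FiniteIndex := by
  refine ⟨fun h0 => ?_⟩
  have hdvd := Dseq_dvd_pow e n m i
  rw [Dseq_eq_index hn m i, h0, Nat.cast_zero, zero_dvd_iff] at hdvd
  exact pow_ne_zero e (Int.natCast_ne_zero.2 hn) hdvd

/-- With `D_1 = n^e` and `D_{i+1}` the gcd of the `e × e` minors of
`(n·I_e | m_1ᵀ | … | m_iᵀ)`, the hypothesis `m_i ∉ (nℤ)^e + Σ_{j<i} m_j ℤ`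
for all `i` implies `D_{i+1} < D_i` for all `1 ≤ i ≤ h`.  (Here indices are shifted
by one: `Dseq e n m i` is the paper's `D_{i+1}`, and `m 0, …, m (h-1)` are the
paper's `m_1, …, m_h`.) -/
theorem Dseq_strict_anti (e n h : ℕ) (hn : 0 < n) (m : ℕ → Fin e → ℕ)
    (hm : ∀ i < h, (fun t : Fin e => (m i t : ℤ)) ∉ latticeUpTo e n i m) :
    ∀ i < h, Dseq e n m (i + 1) < Dseq e n m i := by
  intro i hi
  have hlt : latticeUpTo e n i m < latticeUpTo e n (i + 1) m :=
    SetLike.lt_iff_le_and_exists.2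
      ⟨latticeUpTo_mono_succ e n i m, _, mem_latticeUpTo_succ e n i m, hm i hi⟩
  have := finiteIndex_latticeUpTo hn.ne' i m
  rw [Dseq_eq_index hn.ne', Dseq_eq_index hn.ne', Nat.cast_lt]
  exact AddSubgroup.index_strictAnti (Submodule.toAddSubgroup_strictMono hlt)
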